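/- Block-swap increment identity for the inversion count (long-range branching move): Let x ∈ 𝒮_hgt with interface y, let l ≥ 1 be an integer and let k be a half-integer such that x_m = 1 and x_{m−l} = 0 for every m ∈ {k, k+1, …, k+l−1}. Let x' agree with x except that x'_{m−l} = 1 and x'_m = 0 for those m. Then f_CD(x') − f_CD(x) = ch(y)·l². Symmetrically, if x_m = 0 and x_{m−l} = 1 for every m ∈ {k, …, k+l−1} and x' interchanges the two blocks, then f_CD(x') − f_CD(x) = −ch(y)·l². In particular a block swap of range l changes f_CD by at most l² in absolute value. -/

import Mathlib

open scoped BigOperators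

/- Half-integers `k ∈ ℤ + 1/2` are represented by integers `j`, via `k = j + 1/2`.
A height configuration is a function `x : ℤ → ℤ` with values in `{0,1}`,
eventually constant in both directions with different limiting values. -/
def IsHeight (x : ℤ → ℤ) : Prop :=
  (∀ k, x k = 0 ∨ x k = 1) ∧
  ∃ a b : ℤ, a ≠ b ∧ (∃ N : ℤ, ∀ k ≤ N, x k = a) ∧ (∃ M : ℤ, ∀ k, M ≤ k → x k = b)

/-- The interface of a height configuration: `y i = x (i+1/2) - x (i-1/2)`. -/
def itf (x : ℤ → ℤ) : ℤ → ℤ := fun i => x i - x (i - 1)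

/-- The charge of a particle configuration. -/
noncomputable def charge (y : ℤ → ℤ) : ℤ := ∑ᶠ i, y i

/-- The particle number of a particle configuration. -/
noncomputable def pnum (y : ℤ → ℤ) : ℤ := ∑ᶠ i, |y i|

/-- `κ = (1 + ch(y))/2`. -/
noncomputable def kappa (x : ℤ → ℤ) : ℤ := (1 + charge (itf x)) / 2

/-- The inversion count `f_CD`. -/
noncomputable def fCD (x : ℤ → ℤ) : ℕ :=
  Nat.card {p : ℤ × ℤ // p.1 < p.2 ∧ x p.1 = kappa x ∧ x p.2 = 1 - kappa x}

/-- Flip the height at position `k`. -/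
def flipAt (x : ℤ → ℤ) (k : ℤ) : ℤ → ℤ := Function.update x k (1 - x k)

/-- Interchange the heights at positions `k` and `k+1`. -/
def swapAt (x : ℤ → ℤ) (k : ℤ) : ℤ → ℤ :=
  fun j => if j = k then x (k + 1) else if j = k + 1 then x k else x j

/-- `S(k) = Σ_{l<k} 1{x_l = κ} − Σ_{l>k} 1{x_l = 1−κ}`. -/
noncomputable def Sfun (x : ℤ → ℤ) (k : ℤ) : ℤ :=
  (Nat.card {l : ℤ // l < k ∧ x l = kappa x} : ℤ)
    - (Nat.card {l : ℤ // k < l ∧ x l = 1 - kappa x} : ℤ)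

/-- The spin-flip part of the generator applied to `f_CD`. -/
noncomputable def Gflip (p q : ℤ → ℝ) (x : ℤ → ℤ) : ℝ :=
  ∑ᶠ k : ℤ, (p k + q (k + 1)) * ((fCD (flipAt x k) : ℝ) - (fCD x : ℝ))

/-- The exclusion part of the generator applied to `f_CD`. -/
noncomputable def Gexcl (bp bm : ℤ → ℝ) (x : ℤ → ℤ) : ℝ :=
  ∑ᶠ k : ℤ,
    ((if x k = 0 ∧ x (k + 1) = 1 then bp (k + 1) else 0)
      + (if x k = 1 ∧ x (k + 1) = 0 then bm (k + 1) else 0))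
    * ((fCD (swapAt x k) : ℝ) - (fCD x : ℝ))

/-- Interchange the block of positions `[k, k+l)` with the block `[k−l, k)`. -/
def blockSwap (x : ℤ → ℤ) (k l : ℤ) : ℤ → ℤ :=
  fun j => if k ≤ j ∧ j < k + l then x (j - l)
    else if k - l ≤ j ∧ j < k then x (j + l) else x j

/-!
The block swap `x' = x ∘ σ` is induced by the involution `σ` of `ℤ` exchanging the blocks
`[k - l, k)` and `[k, k + l)` by translation. On pairs `i < j` that do not straddle the two
blocks, `σ × σ` preserves the order, so it is a bijection between the inversions of `x` and those
of `x'` lying outside the `l × l` cross block. Inside the cross block both configurations are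
constant on each block, so exactly one of them has all `l²` pairs there as inversions and the
other none; which one depends on whether the moved value equals `κ`, and `ch(y) = 2κ - 1`.
-/

open Set Function

def inversions {α : Type*} (z : ℤ → α) (a c : α) : Set (ℤ × ℤ) :=
  {p | p.1 < p.2 ∧ z p.1 = a ∧ z p.2 = c}

theorem fCD_eq_ncard_inversions (x : ℤ → ℤ) :
    fCD x = (inversions x (kappa x) (1 - kappa x)).ncard := rfl

def blockSwapIndex (k l j : ℤ) : ℤ :=
  if k ≤ j ∧ j < k + l then j - l else if k - l ≤ j ∧ j < k then j + l else j

def crossBlock (k l : ℤ) : Set (ℤ × ℤ) := Ico (k - l) k ×ˢ Ico k (k + l)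

theorem blockSwap_eq_comp (x : ℤ → ℤ) (k l : ℤ) :
    blockSwap x k l = x ∘ blockSwapIndex k l := by
  funext j; simp only [blockSwap, blockSwapIndex, comp_apply]; split_ifs <;> rfl

theorem blockSwapIndex_involutive (k l : ℤ) : Involutive (blockSwapIndex k l) := by
  intro j; unfold blockSwapIndex; split_ifs <;> omega

theorem blockSwapIndex_lt_and_notMem_crossBlock_iff (k l i j : ℤ) :
    (blockSwapIndex k l i < blockSwapIndex k l j ∧
      (blockSwapIndex k l i, blockSwapIndex k l j) ∉ crossBlock k l) ↔
      (i < j ∧ (i, j) ∉ crossBlock k l) := by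
  simp only [crossBlock, mem_prod, mem_Ico, blockSwapIndex]
  split_ifs <;> omega

theorem blockSwapIndex_of_mem_Ico_left {k l j : ℤ} (hj : j ∈ Ico (k - l) k) :
    blockSwapIndex k l j = j + l := by
  rw [mem_Ico] at hj; unfold blockSwapIndex; split_ifs <;> omega

theorem blockSwapIndex_of_mem_Ico_right {k l j : ℤ} (hj : j ∈ Ico k (k + l)) :
    blockSwapIndex k l j = j - l := by
  rw [mem_Ico] at hj; unfold blockSwapIndex; split_ifs <;> omega

theorem blockSwapIndex_of_notMem_Ico {k l j : ℤ} (hj : j ∉ Ico (k - l) (k + l)) :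
    blockSwapIndex k l j = j := by
  rw [mem_Ico] at hj; unfold blockSwapIndex; split_ifs <;> omega

theorem ncard_crossBlock {k l : ℤ} (hl : 0 ≤ l) : ((crossBlock k l).ncard : ℤ) = l ^ 2 := by
  rw [crossBlock, ncard_prod, ← Finset.coe_Ico, ← Finset.coe_Ico, ncard_coe_finset,
    ncard_coe_finset, Int.card_Ico, Int.card_Ico]
  push_cast
  rw [Int.toNat_of_nonneg (by omega), Int.toNat_of_nonneg (by omega)]
  ring

section Inversions

variable {α : Type*} (k l : ℤ)

theorem inversions_comp_blockSwapIndex_diff_crossBlock (z : ℤ → α) (a c : α) :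
    inversions (z ∘ blockSwapIndex k l) a c \ crossBlock k l =
      Prod.map (blockSwapIndex k l) (blockSwapIndex k l) ''
        (inversions z a c \ crossBlock k l) := by
  have hσ := blockSwapIndex_involutive k l
  rw [(hσ.prodMap hσ).image_eq_preimage_symm]
  ext ⟨i, j⟩
  have := blockSwapIndex_lt_and_notMem_crossBlock_iff k l i j
  simp only [inversions, mem_sdiff, mem_ofPred_eq, mem_preimage, Prod.map_apply, comp_apply]
  tauto

theorem ncard_inversions_comp_blockSwapIndex_diff_crossBlock (z : ℤ → α) (a c : α) :
    (inversions (z ∘ blockSwapIndex k l) a c \ crossBlock k l).ncard =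
      (inversions z a c \ crossBlock k l).ncard := by
  have hσ := blockSwapIndex_involutive k l
  rw [inversions_comp_blockSwapIndex_diff_crossBlock,
    ncard_image_of_injective _ (hσ.prodMap hσ).injective]

theorem Set.Finite.inversions_comp_blockSwapIndex {z : ℤ → α} {a c : α}
    (hfin : (inversions z a c).Finite) : (inversions (z ∘ blockSwapIndex k l) a c).Finite := by
  have hcross : (crossBlock k l).Finite := (finite_Ico _ _).prod (finite_Ico _ _)
  refine Finite.of_sdiff ?_ hcross
  rw [inversions_comp_blockSwapIndex_diff_crossBlock]
  exact hfin.sdiff.image _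

theorem ncard_inversions_inter_crossBlock [DecidableEq α] (hl : 0 ≤ l) {z : ℤ → α}
    {a c u w : α} (hu : ∀ j ∈ Ico (k - l) k, z j = u) (hw : ∀ j ∈ Ico k (k + l), z j = w) :
    ((inversions z a c ∩ crossBlock k l).ncard : ℤ) = if u = a ∧ w = c then l ^ 2 else 0 := by
  split_ifs with h
  · rw [inter_eq_right.mpr, ncard_crossBlock hl]
    rintro ⟨i, j⟩ ⟨hi, hj⟩
    exact ⟨by simp only [mem_Ico] at hi hj; omega, (hu i hi).trans h.1, (hw j hj).trans h.2⟩
  · suffices inversions z a c ∩ crossBlock k l = ∅ by rw [this, ncard_empty, Nat.cast_zero]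
    refine eq_empty_of_forall_notMem ?_
    rintro ⟨i, j⟩ ⟨⟨-, hi, hj⟩, hic, hjc⟩
    exact h ⟨(hu i hic).symm.trans hi, (hw j hjc).symm.trans hj⟩

theorem ncard_inversions_comp_blockSwapIndex_sub [DecidableEq α] (hl : 0 ≤ l)
    {z : ℤ → α} {a c u w : α} (hfin : (inversions z a c).Finite)
    (hu : ∀ j ∈ Ico (k - l) k, z j = u) (hw : ∀ j ∈ Ico k (k + l), z j = w) :
    ((inversions (z ∘ blockSwapIndex k l) a c).ncard : ℤ) - (inversions z a c).ncard =
      (if w = a ∧ u = c then l ^ 2 else 0) - (if u = a ∧ w = c then l ^ 2 else 0) := by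
  have hu' : ∀ j ∈ Ico (k - l) k, (z ∘ blockSwapIndex k l) j = w := fun j hj => by
    rw [comp_apply, blockSwapIndex_of_mem_Ico_left hj]
    exact hw _ (by simp only [mem_Ico] at hj ⊢; omega)
  have hw' : ∀ j ∈ Ico k (k + l), (z ∘ blockSwapIndex k l) j = u := fun j hj => by
    rw [comp_apply, blockSwapIndex_of_mem_Ico_right hj]
    exact hu _ (by simp only [mem_Ico] at hj ⊢; omega)
  rw [← ncard_inter_add_ncard_sdiff_eq_ncard _ (crossBlock k l) hfin,
    ← ncard_inter_add_ncard_sdiff_eq_ncard _ (crossBlock k l)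
      (hfin.inversions_comp_blockSwapIndex k l),
    ncard_inversions_comp_blockSwapIndex_diff_crossBlock]
  push_cast
  rw [ncard_inversions_inter_crossBlock k l hl hu hw,
    ncard_inversions_inter_crossBlock k l hl hu' hw']
  ring

end Inversions

theorem finite_inversions {α : Type*} {z : ℤ → α} {a c : α} {N M : ℤ}
    (hN : ∀ j ≤ N, z j ≠ a) (hM : ∀ j ≥ M, z j ≠ c) : (inversions z a c).Finite := by
  refine ((finite_Ioo N M).prod (finite_Ioo N M)).subset ?_
  rintro ⟨i, j⟩ ⟨hij, hi, hj⟩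
  have hNi : N < i := not_le.mp fun h => hN i h hi
  have hjM : j < M := not_le.mp fun h => hM j h hj
  exact ⟨⟨hNi, by omega⟩, ⟨by omega, hjM⟩⟩

theorem sum_Ioc_sub_pred (f : ℤ → ℤ) {a b : ℤ} (hab : a ≤ b) :
    ∑ i ∈ Finset.Ioc a b, (f i - f (i - 1)) = f b - f a := by
  induction b, hab using Int.leInduction with
  | base => simp
  | succ n hn ih =>
    rw [← Finset.insert_Ioc_right_eq_Ioc_add_one (by omega), Finset.sum_insert (by simp), ih]
    ring_nf

theorem charge_itf_eq_sub {x : ℤ → ℤ} {a b N M : ℤ} (ha : ∀ j ≤ N, x j = a)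
    (hb : ∀ j ≥ M, x j = b) : charge (itf x) = b - a := by
  have hsupp : support (itf x) ⊆ Finset.Ioc (min N M) (max N M) := by
    intro i hi
    rw [mem_support, itf] at hi
    simp only [Finset.coe_Ioc, mem_Ioc]
    by_contra h
    rcases le_or_gt i (min N M) with h' | h'
    · exact hi (by rw [ha i (by omega), ha (i - 1) (by omega), sub_self])
    · exact hi (by rw [hb i (by omega), hb (i - 1) (by omega), sub_self])
  rw [charge, finsum_eq_sum_of_support_subset _ hsupp]
  simp only [itf]
  rw [sum_Ioc_sub_pred x (min_le_left N M |>.trans (le_max_left N M)), ha _ (min_le_left N M),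
    hb _ (le_max_right N M)]

theorem kappa_eq_of_limits {x : ℤ → ℤ} {b N M : ℤ} (ha : ∀ j ≤ N, x j = 1 - b)
    (hb : ∀ j ≥ M, x j = b) : kappa x = b := by
  rw [kappa, charge_itf_eq_sub ha hb]
  omega

namespace IsHeight

theorem exists_limits {x : ℤ → ℤ} (hx : IsHeight x) :
    ∃ N M : ℤ, (∀ j ≤ N, x j = 1 - kappa x) ∧ ∀ j ≥ M, x j = kappa x := by
  obtain ⟨hval, a, b, hab, ⟨N, hN⟩, ⟨M, hM⟩⟩ := hx
  have ha : a = 1 - b := by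
    rcases hN N le_rfl ▸ hval N with ha | ha <;>
      rcases hM M le_rfl ▸ hval M with hb | hb <;> omega
  subst ha
  rw [kappa_eq_of_limits hN hM]
  exact ⟨N, M, hN, hM⟩

theorem kappa_eq_zero_or_one {x : ℤ → ℤ} (hx : IsHeight x) : kappa x = 0 ∨ kappa x = 1 := by
  obtain ⟨-, M, -, hM⟩ := hx.exists_limits
  exact hM M le_rfl ▸ hx.1 M

theorem charge_eq {x : ℤ → ℤ} (hx : IsHeight x) : charge (itf x) = 2 * kappa x - 1 := by
  obtain ⟨N, M, hN, hM⟩ := hx.exists_limits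
  rw [charge_itf_eq_sub hN hM]
  ring

theorem finite_inversions {x : ℤ → ℤ} (hx : IsHeight x) :
    (inversions x (kappa x) (1 - kappa x)).Finite := by
  obtain ⟨N, M, hN, hM⟩ := hx.exists_limits
  exact _root_.finite_inversions (fun j hj => by rw [hN j hj]; omega)
    (fun j hj => by rw [hM j hj]; omega)

theorem kappa_blockSwap {x : ℤ → ℤ} (hx : IsHeight x) (k l : ℤ) :
    kappa (blockSwap x k l) = kappa x := by
  obtain ⟨N, M, hN, hM⟩ := hx.exists_limits
  have hout : ∀ j, j < k - l ∨ k + l ≤ j → blockSwap x k l j = x j := fun j hj => by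
    rw [blockSwap_eq_comp, comp_apply, blockSwapIndex_of_notMem_Ico (by rw [mem_Ico]; omega)]
  exact kappa_eq_of_limits (N := min N (k - l - 1)) (M := max M (k + l))
    (fun j hj => by rw [hout j (by omega), hN j (by omega)])
    (fun j hj => by rw [hout j (by omega), hM j (by omega)])

theorem fCD_blockSwap_sub {x : ℤ → ℤ} (hx : IsHeight x) {k l v : ℤ} (hl : 0 < l)
    (hblock : ∀ m, k ≤ m → m < k + l → x m = v ∧ x (m - l) = 1 - v) :
    (fCD (blockSwap x k l) : ℤ) - fCD x = (2 * v - 1) * charge (itf x) * l ^ 2 := by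
  have hv : v = 0 ∨ v = 1 := (hblock k le_rfl (by omega)).1 ▸ hx.1 k
  have hleft : ∀ j ∈ Ico (k - l) k, x j = 1 - v := fun j hj => by
    rw [mem_Ico] at hj
    simpa using (hblock (j + l) (by omega) (by omega)).2
  have hright : ∀ j ∈ Ico k (k + l), x j = v := fun j hj => (hblock j hj.1 hj.2).1
  rw [fCD_eq_ncard_inversions, fCD_eq_ncard_inversions, hx.kappa_blockSwap, blockSwap_eq_comp,
    ncard_inversions_comp_blockSwapIndex_sub k l hl.le hx.finite_inversions hleft hright,
    hx.charge_eq]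
  rcases hx.kappa_eq_zero_or_one with hκ | hκ <;> rcases hv with rfl | rfl <;> simp [hκ]

end IsHeight

/-- Block-swap increment identity for the inversion count (long-range branching
move): swapping a block of `l` ones leftward past a block of `l` zeros changes
`f_CD` by `ch(y)·l²`, the mirror move changes it by `−ch(y)·l²`, and in either
case the change is at most `l²` in absolute value. -/
theorem block_swap_increment_identity
    (x : ℤ → ℤ) (hx : IsHeight x) (l : ℤ) (hl : 1 ≤ l) (k : ℤ) :
    ((∀ m, k ≤ m → m < k + l → x m = 1 ∧ x (m - l) = 0) →
      (fCD (blockSwap x k l) : ℤ) - (fCD x : ℤ) = charge (itf x) * l ^ 2) ∧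
    ((∀ m, k ≤ m → m < k + l → x m = 0 ∧ x (m - l) = 1) →
      (fCD (blockSwap x k l) : ℤ) - (fCD x : ℤ) = - (charge (itf x) * l ^ 2)) ∧
    (((∀ m, k ≤ m → m < k + l → x m = 1 ∧ x (m - l) = 0) ∨
      (∀ m, k ≤ m → m < k + l → x m = 0 ∧ x (m - l) = 1)) →
      |(fCD (blockSwap x k l) : ℤ) - (fCD x : ℤ)| ≤ l ^ 2) := by
  have hones (h : ∀ m, k ≤ m → m < k + l → x m = 1 ∧ x (m - l) = 0) :
      (fCD (blockSwap x k l) : ℤ) - fCD x = charge (itf x) * l ^ 2 := by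
    rw [hx.fCD_blockSwap_sub hl (v := 1) (by simpa using h)]
    ring
  have hzeros (h : ∀ m, k ≤ m → m < k + l → x m = 0 ∧ x (m - l) = 1) :
      (fCD (blockSwap x k l) : ℤ) - fCD x = -(charge (itf x) * l ^ 2) := by
    rw [hx.fCD_blockSwap_sub hl (v := 0) (by simpa using h)]
    ring
  have hcharge : |charge (itf x)| = 1 := by
    rcases hx.kappa_eq_zero_or_one with hκ | hκ <;> simp [hx.charge_eq, hκ]
  refine ⟨hones, hzeros, ?_⟩
  rintro (h | h)
  · rw [hones h, abs_mul, hcharge, one_mul, abs_sq]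
  · rw [hzeros h, abs_neg, abs_mul, hcharge, one_mul, abs_sq]
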